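/- Let x be a complex polynomial and let z ∈ ℂ satisfy x'(z) ≠ 0. Then the function w ↦ 1/(z−w)² − x'(z)·x'(w)/( x(z) − x(w) )², defined for w ≠ z sufficiently close to z, tends to (1/4)·( x''(z)/x'(z) )² − (1/6)·x'''(z)/x'(z) as w tends to z within the punctured neighborhood w ≠ z. -/

import Mathlib

open Polynomial Topology Filter

/-- The regularized diagonal of the Bergman kernel: for a complex polynomial `x` and a
point `z` with `x'(z) ≠ 0`, `1/(z−w)² − x'(z)x'(w)/(x(z)−x(w))²` tends to
`(1/4)(x''(z)/x'(z))² − (1/6)x'''(z)/x'(z)` as `w → z`, `w ≠ z`. -/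
theorem stmt2 (x : Polynomial ℂ) (z : ℂ) (hz : (derivative x).eval z ≠ 0) :
    Tendsto (fun w : ℂ =>
        1 / (z - w) ^ 2 -
          (derivative x).eval z * (derivative x).eval w / (x.eval z - x.eval w) ^ 2)
      (𝓝[≠] z)
      (𝓝 ((1 / 4) * ((derivative (derivative x)).eval z / (derivative x).eval z) ^ 2
        - (1 / 6) * (derivative (derivative (derivative x))).eval z /
            (derivative x).eval z)) := by
  set a := (derivative x).eval z with ha
  -- factor x - x(z) = (X - z) q
  obtain ⟨q, hq⟩ : (X - C z) ∣ (x - C (x.eval z)) := by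
    apply dvd_iff_isRoot.mpr
    simp [IsRoot]
  have hd : derivative x = q + (X - C z) * derivative q := by
    have h := congrArg derivative hq
    simpa [derivative_mul] using h
  -- eval facts
  have e1 : q.eval z = a := by
    have := congrArg (eval z) hd
    simpa using this.symm
  have hd2 : derivative (derivative x)
      = 2 * derivative q + (X - C z) * derivative (derivative q) := by
    have h := congrArg derivative hd
    rw [h, derivative_add, derivative_mul, derivative_X_sub_C]
    ring
  have e2 : (derivative (derivative x)).eval z = 2 * (derivative q).eval z := by
    have := congrArg (eval z) hd2
    simpa using this
  have hd3 : derivative (derivative (derivative x))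
      = 3 * derivative (derivative q)
        + (X - C z) * derivative (derivative (derivative q)) := by
    have h := congrArg derivative hd2
    rw [h, derivative_add, derivative_mul, derivative_mul, derivative_X_sub_C,
      derivative_ofNat]
    ring
  have e3 : (derivative (derivative (derivative x))).eval z
      = 3 * (derivative (derivative q)).eval z := by
    have := congrArg (eval z) hd3
    simpa using this
  -- M := q^2 - a * x'
  obtain ⟨s, hs⟩ : (X - C z) ∣ (q ^ 2 - C a * derivative x) := by
    apply dvd_iff_isRoot.mpr
    simp [IsRoot, e1, sq]
    rw [← ha, sub_self]
  have hMd : derivative (q ^ 2 - C a * derivative x)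
      = s + (X - C z) * derivative s := by
    have h := congrArg derivative hs
    rw [h, derivative_mul, derivative_X_sub_C]
    ring
  have es0 : s.eval z = 0 := by
    have h := congrArg (eval z) hMd
    have h2 : (derivative (q ^ 2 - C a * derivative x)).eval z = 0 := by
      rw [derivative_sub, derivative_pow, derivative_mul]
      simp [e1, e2]
      ring
    rw [h2] at h
    simpa using h.symm
  obtain ⟨r, hr⟩ : (X - C z) ∣ s := dvd_iff_isRoot.mpr es0
  have er : r.eval z = ((derivative (derivative x)).eval z / 2) ^ 2
      - a * (derivative (derivative (derivative x))).eval z / 6 := by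
    -- second derivative of M evaluated at z, two ways
    have hMd2 : derivative (derivative (q ^ 2 - C a * derivative x))
        = 2 * derivative s + (X - C z) * derivative (derivative s) := by
      have h := congrArg derivative hMd
      rw [h, derivative_add, derivative_mul, derivative_X_sub_C]
      ring
    have h1 : (derivative (derivative (q ^ 2 - C a * derivative x))).eval z
        = 2 * (derivative s).eval z := by
      have := congrArg (eval z) hMd2
      simpa using this
    have h2 : (derivative s).eval z = r.eval z := by
      have h := congrArg derivative hr
      have := congrArg (eval z) h
      simp [derivative_mul] at this
      simpa using this
    have h3 : (derivative (derivative (q ^ 2 - C a * derivative x))).eval z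
        = 2 * ((derivative q).eval z) ^ 2 + 2 * a * (derivative (derivative q)).eval z
          - a * (derivative (derivative (derivative x))).eval z := by
      simp only [derivative_sub, derivative_pow, derivative_mul, derivative_C,
        eval_sub, eval_add, eval_mul, eval_pow, eval_C, zero_mul, zero_add,
        eval_natCast]
      simp [e1]
      ring
    rw [h2] at h1
    have e2' : (derivative q).eval z = (derivative (derivative x)).eval z / 2 := by
      field_simp [e2]
      rw [e2]; ring
    have e3' : (derivative (derivative q)).eval z
        = (derivative (derivative (derivative x))).eval z / 3 := by
      field_simp [e3]
      rw [e3]; ring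
    rw [h3, e2', e3'] at h1
    field_simp at h1 ⊢
    linear_combination (-2 : ℂ) * h1
  -- limit of r/q^2
  have hqz : q.eval z ≠ 0 := by rw [e1]; exact hz
  have key : Tendsto (fun w => r.eval w / (q.eval w) ^ 2) (𝓝[≠] z)
      (𝓝 (r.eval z / (q.eval z) ^ 2)) := by
    apply Tendsto.mono_left _ nhdsWithin_le_nhds
    exact (r.continuous.tendsto z).div (((q.continuous).pow 2).tendsto z)
      (pow_ne_zero 2 hqz)
  have hqe : ∀ᶠ w in 𝓝[≠] z, q.eval w ≠ 0 := by
    apply eventually_nhdsWithin_of_eventually_nhds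
    exact (q.continuous.tendsto z).eventually_ne hqz
  have heq : (fun w => r.eval w / (q.eval w) ^ 2) =ᶠ[𝓝[≠] z]
      (fun w : ℂ => 1 / (z - w) ^ 2 -
        a * (derivative x).eval w / (x.eval z - x.eval w) ^ 2) := by
    filter_upwards [hqe, self_mem_nhdsWithin] with w hqw hw
    have hw' : w - z ≠ 0 := sub_ne_zero.mpr hw
    have hzw : z - w ≠ 0 := sub_ne_zero.mpr (Ne.symm hw)
    have hxw : x.eval w - x.eval z = (w - z) * q.eval w := by
      have := congrArg (eval w) hq
      simpa using this
    have hM : q.eval w ^ 2 - a * (derivative x).eval w = (w - z) ^ 2 * r.eval w := by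
      have h1 := congrArg (eval w) hs
      have h2 := congrArg (eval w) hr
      simp at h1 h2
      rw [h1, h2]
      ring
    have hc : x.eval z - x.eval w = -((w - z) * q.eval w) := by
      rw [← hxw]; ring
    rw [hc]
    have hax : a * (derivative x).eval w = q.eval w ^ 2 - (w - z) ^ 2 * r.eval w := by
      linear_combination (-1 : ℂ) * hM
    rw [hax]
    field_simp
    ring
  have hval : r.eval z / (q.eval z) ^ 2
      = (1 / 4) * ((derivative (derivative x)).eval z / a) ^ 2
        - (1 / 6) * (derivative (derivative (derivative x))).eval z / a := by
    rw [e1, er]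
    field_simp
    ring
  rw [← hval]
  exact key.congr' heq
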